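/- Let $k > 2$, $f(y) = y + |y|^{p-1}y$ with $p>1$, and let $y : (0,\infty) \to \mathbb{R}$ be a $C^2$ solution of $y'' + t^{-k} f(y) = 0$ on $(0,\infty)$. If $T > 0$ is a zero of $y$ (i.e., $y(T) = 0$) and $y$ is not identically zero near $T$, then for all $0 < t < T$ we have $|y(t)| < |y'(T)|\,(T - t)$. -/

import Mathlib

/-!
The weighted energy `s ^ k * y' ^ 2 / 2 + F y` (with `F' = f`) is nondecreasing and the energy
`y' ^ 2 / 2 + s ^ (-k) * F y` is nonincreasing; together they force `y' T ≠ 0` for a solution that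
does not vanish near `T`. On an interval `[s, T)` free of zeros `y` has a constant sign, which `f y`
shares, so `|y|` is strictly concave there and lies below its tangent line `|y' T| * (T - s)`
at `T`. Otherwise take a critical point `m` of `y` between the last zero before `T` and `T`:
the weighted energy on `[t, m]` gives `F (y t) ≤ F (y m)`, hence `|y t| ≤ |y m| < |y' T| * (T - m)`.
-/

open Real Set Filter Topology

theorem IsPreconnected.forall_pos_of_ne_zero {S : Set ℝ} (hS : IsPreconnected S)
    {g : ℝ → ℝ} (hg : ContinuousOn g S) (hne : ∀ x ∈ S, g x ≠ 0) {a : ℝ} (ha : a ∈ S)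
    (hpos : 0 < g a) : ∀ x ∈ S, 0 < g x := by
  intro x hx
  by_contra! hle
  obtain ⟨z, hz, hz0⟩ := hS.intermediate_value hx ha hg ⟨hle, hpos.le⟩
  exact hne z hz hz0

theorem lt_add_deriv_mul_sub_of_deriv2_neg {y y' y'' : ℝ → ℝ} {s T : ℝ} (hsT : s < T)
    (hy : ∀ r ∈ Icc s T, HasDerivAt y (y' r) r) (hy' : ∀ r ∈ Icc s T, HasDerivAt y' (y'' r) r)
    (hy'' : ∀ r ∈ Ioo s T, y'' r < 0) : y s < y T + y' T * (s - T) := by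
  have hanti : StrictAntiOn y' (Icc s T) := by
    refine strictAntiOn_of_hasDerivWithinAt_neg (convex_Icc s T)
      (fun r hr => (hy' r hr).continuousAt.continuousWithinAt)
      (fun r hr => (hy' r (interior_subset hr)).hasDerivWithinAt) ?_
    rwa [interior_Icc]
  obtain ⟨ξ, hξ, hslope⟩ := exists_hasDerivAt_eq_slope y y' hsT
    (fun r hr => (hy r hr).continuousAt.continuousWithinAt)
    (fun r hr => hy r (Ioo_subset_Icc_self hr))
  have hlt : y' T < y' ξ := hanti ⟨hξ.1.le, hξ.2.le⟩ ⟨hsT.le, le_rfl⟩ hξ.2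
  rw [hslope, lt_div_iff₀ (sub_pos.2 hsT)] at hlt
  linarith

theorem exists_last_zero {y : ℝ → ℝ} {t T : ℝ} (hy : ContinuousOn y (Icc t T))
    (hT : ∀ᶠ r in 𝓝[<] T, y r ≠ 0) (hz : ∃ s ∈ Ico t T, y s = 0) :
    ∃ b ∈ Ico t T, y b = 0 ∧ ∀ r ∈ Ioo b T, y r ≠ 0 := by
  obtain ⟨s, hs, hys⟩ := hz
  obtain ⟨a, haT, hnear⟩ := mem_nhdsLT_iff_exists_Ioo_subset.1 hT
  have hsa : s ≤ a := not_lt.1 fun has => hnear ⟨has, hs.2⟩ hys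
  have hK : IsCompact (Icc t a ∩ y ⁻¹' {0}) :=
    isCompact_Icc.of_isClosed_subset
      ((hy.mono (Icc_subset_Icc_right haT.le)).preimage_isClosed_of_isClosed isClosed_Icc
        isClosed_singleton) inter_subset_left
  obtain ⟨b, ⟨⟨htb, hba⟩, hyb⟩, hbmax⟩ := hK.exists_isGreatest ⟨s, ⟨hs.1, hsa⟩, hys⟩
  refine ⟨b, ⟨htb, hba.trans_lt haT⟩, hyb, fun r hr hyr => ?_⟩
  rcases le_or_gt r a with hra | har
  · exact (hbmax ⟨⟨htb.trans hr.1.le, hra⟩, hyr⟩).not_gt hr.1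
  · exact hnear ⟨har, hr.2⟩ hyr

namespace EmdenFowler

noncomputable def nonlinearity (p z : ℝ) : ℝ := z + |z| ^ (p - 1) * z

noncomputable def potential (p z : ℝ) : ℝ := z ^ 2 / 2 + |z| ^ (p + 1) / (p + 1)

theorem nonlinearity_neg (p z : ℝ) : nonlinearity p (-z) = -nonlinearity p z := by
  simp only [nonlinearity, abs_neg]
  ring

theorem nonlinearity_pos (p : ℝ) {z : ℝ} (hz : 0 < z) : 0 < nonlinearity p z := by
  unfold nonlinearity
  positivity

theorem hasDerivAt_potential {p : ℝ} (hp : 0 < p) (z : ℝ) :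
    HasDerivAt (potential p) (nonlinearity p z) z := by
  have hsq := (hasDerivAt_pow 2 z).div_const 2
  have habs := (hasDerivAt_abs_rpow z (by linarith : 1 < p + 1)).div_const (p + 1)
  refine (hsq.fun_add habs).congr_deriv ?_
  rw [nonlinearity, show p + 1 - 2 = p - 1 by ring]
  field_simp
  ring

theorem potential_zero (p : ℝ) : potential p 0 = 0 := by
  by_cases hp : p + 1 = 0 <;> simp [potential, hp]

theorem potential_pos {p : ℝ} (hp : -1 < p) {z : ℝ} (hz : z ≠ 0) : 0 < potential p z := by
  have : 0 < p + 1 := by linarith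
  unfold potential
  positivity

theorem abs_le_abs_of_potential_le {p : ℝ} (hp : -1 < p) {a b : ℝ}
    (h : potential p a ≤ potential p b) : |a| ≤ |b| := by
  by_contra! hba
  have hsq : b ^ 2 < a ^ 2 := sq_lt_sq.2 hba
  have hpow : |b| ^ (p + 1) / (p + 1) ≤ |a| ^ (p + 1) / (p + 1) := by
    gcongr
    · linarith
    · linarith
  simp only [potential] at h
  linarith

structure IsSolution (k : ℝ) (f y y' : ℝ → ℝ) : Prop where
  hasDerivAt : ∀ s ∈ Ioi (0 : ℝ), HasDerivAt y (y' s) s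
  hasDerivAt_deriv : ∀ s ∈ Ioi (0 : ℝ), HasDerivAt y' (-(s ^ (-k) * f (y s))) s

noncomputable def weightedEnergy (k : ℝ) (F y y' : ℝ → ℝ) (s : ℝ) : ℝ :=
  s ^ k * y' s ^ 2 / 2 + F (y s)

noncomputable def energy (k : ℝ) (F y y' : ℝ → ℝ) (s : ℝ) : ℝ :=
  y' s ^ 2 / 2 + s ^ (-k) * F (y s)

namespace IsSolution

variable {k : ℝ} {f F y y' : ℝ → ℝ}

theorem of_contDiffOn (hy : ContDiffOn ℝ 2 y (Ioi 0))
    (hode : ∀ t ∈ Ioi (0 : ℝ), deriv (deriv y) t + t ^ (-k) * f (y t) = 0) :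
    IsSolution k f y (deriv y) where
  hasDerivAt s hs :=
    ((hy.differentiableOn (by norm_num)).differentiableAt (Ioi_mem_nhds hs)).hasDerivAt
  hasDerivAt_deriv s hs := by
    have hy' : ContDiffOn ℝ 1 (deriv y) (Ioi 0) := hy.deriv_of_isOpen isOpen_Ioi (by norm_num)
    rw [← eq_neg_of_add_eq_zero_left (hode s hs)]
    exact ((hy'.differentiableOn one_ne_zero).differentiableAt (Ioi_mem_nhds hs)).hasDerivAt

theorem neg (h : IsSolution k f y y') (hf : ∀ z, f (-z) = -f z) :
    IsSolution k f (fun s => -y s) (fun s => -y' s) where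
  hasDerivAt s hs := (h.hasDerivAt s hs).neg
  hasDerivAt_deriv s hs := by
    refine (h.hasDerivAt_deriv s hs).fun_neg.congr_deriv ?_
    rw [hf]
    ring

theorem continuousOn (h : IsSolution k f y y') {S : Set ℝ} (hS : S ⊆ Ioi 0) :
    ContinuousOn y S :=
  fun s hs => (h.hasDerivAt s (hS hs)).continuousAt.continuousWithinAt

theorem hasDerivAt_weightedEnergy (h : IsSolution k f y y') (hF : ∀ z, HasDerivAt F (f z) z)
    {s : ℝ} (hs : 0 < s) :
    HasDerivAt (weightedEnergy k F y y') (k * s ^ (k - 1) * y' s ^ 2 / 2) s := by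
  have hweight : HasDerivAt (fun s : ℝ => s ^ k) (k * s ^ (k - 1)) s :=
    hasDerivAt_rpow_const (Or.inl hs.ne')
  have hkin := (hweight.fun_mul ((h.hasDerivAt_deriv s hs).fun_pow 2)).div_const 2
  have hpot := (hF (y s)).comp s (h.hasDerivAt s hs)
  refine (hkin.fun_add hpot).congr_deriv ?_
  have hcancel : s ^ k * s ^ (-k) = 1 := by rw [← rpow_add hs, add_neg_cancel, rpow_zero]
  push_cast
  linear_combination -(f (y s) * y' s) * hcancel

theorem hasDerivAt_energy (h : IsSolution k f y y') (hF : ∀ z, HasDerivAt F (f z) z)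
    {s : ℝ} (hs : 0 < s) :
    HasDerivAt (energy k F y y') (-k * s ^ (-k - 1) * F (y s)) s := by
  have hweight : HasDerivAt (fun s : ℝ => s ^ (-k)) (-k * s ^ (-k - 1)) s :=
    hasDerivAt_rpow_const (Or.inl hs.ne')
  have hkin := ((h.hasDerivAt_deriv s hs).fun_pow 2).div_const 2
  have hpot := hweight.fun_mul ((hF (y s)).comp s (h.hasDerivAt s hs))
  refine (hkin.fun_add hpot).congr_deriv ?_
  simp only [Function.comp_apply]
  push_cast
  ring

theorem monotoneOn_weightedEnergy (h : IsSolution k f y y') (hF : ∀ z, HasDerivAt F (f z) z)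
    (hk : 0 ≤ k) : MonotoneOn (weightedEnergy k F y y') (Ioi 0) := by
  refine monotoneOn_of_hasDerivWithinAt_nonneg (f' := fun s => k * s ^ (k - 1) * y' s ^ 2 / 2)
    (convex_Ioi 0)
    (fun s hs => (h.hasDerivAt_weightedEnergy hF hs).continuousAt.continuousWithinAt) ?_ ?_
  · rw [interior_Ioi]
    exact fun s hs => (h.hasDerivAt_weightedEnergy hF hs).hasDerivWithinAt
  · rw [interior_Ioi]
    intro s hs
    have : (0 : ℝ) < s := hs
    positivity

theorem antitoneOn_energy (h : IsSolution k f y y') (hF : ∀ z, HasDerivAt F (f z) z)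
    (hF0 : ∀ z, 0 ≤ F z) (hk : 0 ≤ k) : AntitoneOn (energy k F y y') (Ioi 0) := by
  refine antitoneOn_of_hasDerivWithinAt_nonpos (f' := fun s => -k * s ^ (-k - 1) * F (y s))
    (convex_Ioi 0)
    (fun s hs => (h.hasDerivAt_energy hF hs).continuousAt.continuousWithinAt) ?_ ?_
  · rw [interior_Ioi]
    exact fun s hs => (h.hasDerivAt_energy hF hs).hasDerivWithinAt
  · rw [interior_Ioi]
    intro s hs
    have : 0 ≤ k * s ^ (-k - 1) * F (y s) := by
      have : (0 : ℝ) < s := hs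
      have := hF0 (y s)
      positivity
    linarith

theorem eqOn_zero_of_eq_zero_of_deriv_eq_zero (h : IsSolution k f y y')
    (hF : ∀ z, HasDerivAt F (f z) z) (hF0 : F 0 = 0) (hFpos : ∀ z, z ≠ 0 → 0 < F z) (hk : 0 ≤ k)
    {T : ℝ} (hT : 0 < T) (hyT : y T = 0) (hy'T : y' T = 0) : EqOn y 0 (Ioi 0) := by
  intro s hs
  by_contra hys
  have hFys := hFpos (y s) hys
  have hs' : (0 : ℝ) < s := hs
  rcases le_or_gt s T with hsT | hTs
  · have hmono := h.monotoneOn_weightedEnergy hF hk hs hT hsT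
    simp only [weightedEnergy, hyT, hy'T, hF0] at hmono
    have : 0 ≤ s ^ k * y' s ^ 2 / 2 := by positivity
    linarith
  · have hanti := h.antitoneOn_energy hF (fun z => by
      rcases eq_or_ne z 0 with rfl | hz
      exacts [hF0.ge, (hFpos z hz).le]) hk hT hs hTs.le
    simp only [energy, hyT, hy'T, hF0] at hanti
    have : 0 < s ^ (-k) * F (y s) := by positivity
    have : 0 ≤ y' s ^ 2 / 2 := by positivity
    linarith

theorem potential_le_of_deriv_eq_zero (h : IsSolution k f y y')
    (hF : ∀ z, HasDerivAt F (f z) z) (hk : 0 ≤ k) {t m : ℝ} (ht : 0 < t) (htm : t ≤ m)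
    (hy'm : y' m = 0) : F (y t) ≤ F (y m) := by
  have hmono := h.monotoneOn_weightedEnergy hF hk ht (ht.trans_le htm) htm
  simp only [weightedEnergy, hy'm] at hmono
  have : 0 ≤ t ^ k * y' t ^ 2 / 2 := by positivity
  linarith

theorem lt_neg_deriv_mul_of_pos_on_Ico (h : IsSolution k f y y') (hf : ∀ z, 0 < z → 0 < f z)
    {s T : ℝ} (hs : 0 < s) (hsT : s < T) (hyT : y T = 0) (hpos : ∀ r ∈ Ico s T, 0 < y r) :
    y s < -y' T * (T - s) := by
  have hconc := lt_add_deriv_mul_sub_of_deriv2_neg hsT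
    (fun r hr => h.hasDerivAt r (hs.trans_le hr.1))
    (fun r hr => h.hasDerivAt_deriv r (hs.trans_le hr.1))
    (fun r hr => neg_neg_of_pos (mul_pos (rpow_pos_of_pos (hs.trans hr.1) _)
      (hf _ (hpos r (Ioo_subset_Ico_self hr)))))
  rw [hyT] at hconc
  linarith

theorem abs_lt_of_ne_zero_on_Ico (h : IsSolution k f y y') (hf_neg : ∀ z, f (-z) = -f z)
    (hf : ∀ z, 0 < z → 0 < f z) {s T : ℝ} (hs : 0 < s) (hsT : s < T) (hyT : y T = 0)
    (hne : ∀ r ∈ Ico s T, y r ≠ 0) : |y s| < |y' T| * (T - s) := by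
  have hcont : ContinuousOn y (Ico s T) := h.continuousOn fun r hr => hs.trans_le hr.1
  have hsT' : s ∈ Ico s T := ⟨le_rfl, hsT⟩
  rcases (hne s hsT').lt_or_gt with hneg | hpos
  · have hlt := (h.neg hf_neg).lt_neg_deriv_mul_of_pos_on_Ico hf hs hsT (by simp [hyT])
      (isPreconnected_Ico.forall_pos_of_ne_zero hcont.neg (fun r hr => neg_ne_zero.2 (hne r hr))
        hsT' (neg_pos.2 hneg))
    rw [abs_of_neg hneg]
    linarith [mul_le_mul_of_nonneg_right (le_abs_self (y' T)) (sub_nonneg.2 hsT.le)]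
  · have hlt := h.lt_neg_deriv_mul_of_pos_on_Ico hf hs hsT hyT
      (isPreconnected_Ico.forall_pos_of_ne_zero hcont hne hsT' hpos)
    rw [abs_of_pos hpos]
    linarith [mul_le_mul_of_nonneg_right (neg_le_abs (y' T)) (sub_nonneg.2 hsT.le)]

end IsSolution

end EmdenFowler

open EmdenFowler in
theorem stmt1 (k p : ℝ) (hk : 2 < k) (hp : 1 < p) (y : ℝ → ℝ)
    (hy : ContDiffOn ℝ 2 y (Set.Ioi 0))
    (hode : ∀ t ∈ Set.Ioi (0 : ℝ),
      deriv (deriv y) t + t ^ (-k) * (y t + |y t| ^ (p - 1) * y t) = 0)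
    (T : ℝ) (hT : 0 < T) (hyT : y T = 0)
    (hnz : ¬ ∀ᶠ s in nhds T, y s = 0) :
    ∀ t, 0 < t → t < T → |y t| < |deriv y T| * (T - t) := by
  have hsol : IsSolution k (nonlinearity p) y (deriv y) := .of_contDiffOn hy hode
  have hF := hasDerivAt_potential (by linarith : 0 < p)
  have hk0 : 0 ≤ k := by linarith
  have hp0 : -1 < p := by linarith
  have hy'T : deriv y T ≠ 0 := fun h0 => hnz <| eventually_of_mem (Ioi_mem_nhds hT) <|
    hsol.eqOn_zero_of_eq_zero_of_deriv_eq_zero hF (potential_zero p)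
      (fun _ => potential_pos hp0) hk0 hT hyT h0
  intro t ht htT
  by_cases hz : ∃ s ∈ Ico t T, y s = 0
  · obtain ⟨b, hb, hyb, hne⟩ := exists_last_zero (hsol.continuousOn fun r hr => ht.trans_le hr.1)
      (((hsol.hasDerivAt T hT).eventually_ne hy'T).filter_mono
        (nhdsWithin_mono _ fun _ hr => ne_of_lt hr)) hz
    obtain ⟨m, hm, hy'm⟩ := exists_hasDerivAt_eq_zero hb.2
      (hsol.continuousOn fun r hr => (ht.trans_le hb.1).trans_le hr.1) (hyb.trans hyT.symm)
      (fun r hr => hsol.hasDerivAt r ((ht.trans_le hb.1).trans hr.1))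
    have hm0 : 0 < m := (ht.trans_le hb.1).trans hm.1
    calc |y t| ≤ |y m| := abs_le_abs_of_potential_le hp0
          (hsol.potential_le_of_deriv_eq_zero hF hk0 ht (hb.1.trans hm.1.le) hy'm)
      _ < |deriv y T| * (T - m) := hsol.abs_lt_of_ne_zero_on_Ico (nonlinearity_neg p)
          (fun _ => nonlinearity_pos p) hm0 hm.2 hyT fun r hr => hne r ⟨hm.1.trans_le hr.1, hr.2⟩
      _ ≤ |deriv y T| * (T - t) := by gcongr; linarith [hb.1, hm.1]
  · exact hsol.abs_lt_of_ne_zero_on_Ico (nonlinearity_neg p) (fun _ => nonlinearity_pos p) ht htT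
      hyT fun r hr hyr => hz ⟨r, hr, hyr⟩
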